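/- For j, m ∈ ℤ_{≥0}, the linear form ⟨(a⁻)^j k^m⟩₁₁ = ⟨χ̄₁(x)|(a⁻)^j k^m|χ₁(1)⟩ / ⟨χ̄₁(x)|χ₁(1)⟩ equals p^{m/2 + mj} (-p;p)_j (x;p)_m / (-px;p)_{j+m}. -/

import Mathlib

noncomputable def aMinus (p : ℝ) (v : ℕ → ℂ) : ℕ → ℂ := fun m =>
  ((Real.sqrt (1 - p ^ (2 * m + 2)) : ℝ) : ℂ) * v (m + 1)

noncomputable def kOp (p : ℝ) (v : ℕ → ℂ) : ℕ → ℂ := fun m =>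
  ((p : ℂ) ^ m * ((Real.sqrt p : ℝ) : ℂ)) * v m

noncomputable def qPoch (a q : ℝ) (m : ℕ) : ℝ := ∏ i ∈ Finset.range m, (1 - a * q ^ i)

noncomputable def chi1 (p x : ℝ) : ℕ → ℂ := fun m =>
  (x : ℂ) ^ m * ((Real.sqrt (qPoch (p ^ 2) (p ^ 2) m) : ℝ) : ℂ) / ((qPoch p p m : ℝ) : ℂ)

noncomputable def pairF (f g : ℕ → ℂ) : ℂ := ∑' n : ℕ, f n * g n

/-!
The pairing `⟨χ̄₁(x)|χ₁(y)⟩` is the basic hypergeometric series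
`₁φ₀(-p; –; p, xy) = ∑ (-p;p)ₙ/(p;p)ₙ (xy)ⁿ`, because `(p²;p²)ₙ = (p;p)ₙ (-p;p)ₙ`.
On `χ₁(y)` the operator `k` rescales `y ↦ p y` (up to `√p`) and `a⁻` acts diagonally, by
`y (1 + p^{n+1})` on the `n`-th coordinate, so the numerator is
`p^{m/2 + mj} (-p;p)_j ₁φ₀(-p^{j+1}; –; p, p^m x)`.
Instead of the product formula `₁φ₀(a; –; p, z) = (az;p)_∞/(z;p)_∞` we use the two contiguous
relations it encodes, `φ(a, z) = (1 - az) φ(ap, z)` and `(1 - z) φ(a, z) = (1 - az) φ(a, pz)`,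
each read off termwise; iterating them relates `₁φ₀(-p^{j+1}; –; p, p^m x)` to `₁φ₀(-p; –; p, x)`.
-/

lemma qPoch_succ (a q : ℝ) (n : ℕ) : qPoch a q (n + 1) = qPoch a q n * (1 - a * q ^ n) :=
  Finset.prod_range_succ _ _

lemma qPoch_succ' (a q : ℝ) (n : ℕ) : qPoch a q (n + 1) = (1 - a) * qPoch (a * q) q n := by
  simp only [qPoch, Finset.prod_range_succ', pow_zero, mul_one, pow_succ, mul_assoc, mul_comm]

lemma qPoch_add (a q : ℝ) (s t : ℕ) :
    qPoch a q (s + t) = qPoch a q s * qPoch (a * q ^ s) q t := by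
  simp only [qPoch, Finset.prod_range_add, pow_add, mul_assoc]

lemma qPoch_sq_sq (a q : ℝ) (n : ℕ) : qPoch (a ^ 2) (q ^ 2) n = qPoch a q n * qPoch (-a) q n := by
  simp only [qPoch, ← Finset.prod_mul_distrib]
  exact Finset.prod_congr rfl fun i _ => by ring

lemma qPoch_pos {a q : ℝ} (ha : |a| < 1) (hq : |q| ≤ 1) (n : ℕ) : 0 < qPoch a q n := by
  refine Finset.prod_pos fun i _ => ?_
  have : |a * q ^ i| < 1 := by
    rw [abs_mul, abs_pow]
    exact lt_of_le_of_lt (mul_le_of_le_one_right (abs_nonneg a) (pow_le_one₀ (abs_nonneg q) hq)) ha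
  linarith [le_abs_self (a * q ^ i)]

lemma one_sub_pow_succ_pos {p : ℝ} (hp : |p| < 1) (n : ℕ) : 0 < 1 - p ^ (n + 1) := by
  have : |p ^ (n + 1)| < 1 := by
    rw [abs_pow]; exact pow_lt_one₀ (abs_nonneg p) hp n.succ_ne_zero
  linarith [le_abs_self (p ^ (n + 1))]

lemma abs_pow_mul_lt_one {p z : ℝ} (hp : |p| < 1) (hz : |z| < 1) (m : ℕ) : |p ^ m * z| < 1 := by
  rw [abs_mul, abs_pow]
  exact lt_of_le_of_lt (mul_le_of_le_one_left (abs_nonneg z)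
    (pow_le_one₀ (abs_nonneg p) hp.le)) hz

lemma tsum_sub_tsum_of_succ {f g : ℕ → ℝ} (hf : Summable f) (hg : Summable g) (h0 : f 0 = g 0)
    (c : ℝ) (h : ℕ → ℝ) (hs : ∀ n, f (n + 1) - g (n + 1) = c * h n) :
    ∑' n, f n - ∑' n, g n = c * ∑' n, h n := by
  rw [← hf.tsum_sub hg, (hf.sub hg).tsum_eq_zero_add, h0, sub_self, zero_add, ← tsum_mul_left]
  exact tsum_congr hs

noncomputable def phi10Term (p a z : ℝ) (n : ℕ) : ℝ := qPoch a p n / qPoch p p n * z ^ n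

noncomputable def phi10 (p a z : ℝ) : ℝ := ∑' n, phi10Term p a z n

section Phi10

variable {p : ℝ}

lemma phi10Term_zero (a z : ℝ) : phi10Term p a z 0 = 1 := by
  simp [phi10Term, qPoch]

lemma phi10Term_succ (hp : |p| < 1) (a z : ℝ) (n : ℕ) :
    phi10Term p a z (n + 1) = (1 - a * p ^ n) * z / (1 - p ^ (n + 1)) * phi10Term p a z n := by
  have := (qPoch_pos hp hp.le n).ne'
  have := (one_sub_pow_succ_pos hp n).ne'
  rw [phi10Term, phi10Term, qPoch_succ, qPoch_succ, ← pow_succ']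
  field_simp
  ring

lemma summable_phi10Term (hp : |p| < 1) (a : ℝ) {z : ℝ} (hz : |z| < 1) :
    Summable (phi10Term p a z) := by
  have hratio : Filter.Tendsto (fun n : ℕ => ‖(1 - a * p ^ n) * z / (1 - p ^ (n + 1))‖)
      Filter.atTop (nhds ‖z‖) := by
    have h0 := tendsto_pow_atTop_nhds_zero_of_abs_lt_one hp
    have h1 := h0.comp (Filter.tendsto_add_atTop_nat 1)
    have := (((tendsto_const_nhds (x := (1:ℝ))).sub (h0.const_mul a)).mul_const z).div
      ((tendsto_const_nhds (x := (1:ℝ))).sub h1) (by norm_num)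
    simpa [Function.comp_def] using this.norm
  refine summable_of_ratio_norm_eventually_le (r := (1 + |z|) / 2) (by linarith) ?_
  filter_upwards [hratio.eventually_lt_const (show ‖z‖ < (1 + |z|) / 2 by
    rw [Real.norm_eq_abs]; linarith)] with n hn
  rw [phi10Term_succ hp, norm_mul]
  exact mul_le_mul_of_nonneg_right hn.le (norm_nonneg _)

lemma phi10Term_pos {a z : ℝ} (hp : |p| < 1) (ha : |a| < 1) (hz : 0 < z) (n : ℕ) :
    0 < phi10Term p a z n :=
  mul_pos (div_pos (qPoch_pos ha hp.le n) (qPoch_pos hp hp.le n)) (pow_pos hz n)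

lemma phi10_pos {a z : ℝ} (hp : |p| < 1) (ha : |a| < 1) (hz0 : 0 < z) (hz : |z| < 1) :
    0 < phi10 p a z :=
  (summable_phi10Term hp a hz).tsum_pos (fun n => (phi10Term_pos hp ha hz0 n).le) 0
    (phi10Term_pos hp ha hz0 0)

lemma phi10Term_succ_sub_param_shift (hp : |p| < 1) (a z : ℝ) (n : ℕ) :
    phi10Term p a z (n + 1) - phi10Term p (a * p) z (n + 1) = -a * z * phi10Term p (a * p) z n := by
  have := (qPoch_pos hp hp.le n).ne'
  have := (one_sub_pow_succ_pos hp n).ne'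
  rw [phi10Term, phi10Term, phi10Term, qPoch_succ', qPoch_succ (a * p), qPoch_succ p,
    ← pow_succ']
  field_simp
  ring

lemma phi10Term_succ_sub_arg_shift (hp : |p| < 1) (a z : ℝ) (n : ℕ) :
    phi10Term p a z (n + 1) - phi10Term p a (p * z) (n + 1) =
      (1 - a) * z * phi10Term p (a * p) z n := by
  have := (qPoch_pos hp hp.le n).ne'
  have := (one_sub_pow_succ_pos hp n).ne'
  rw [phi10Term, phi10Term, phi10Term, qPoch_succ' a, qPoch_succ p, ← pow_succ', mul_pow]
  field_simp
  ring

lemma qPoch_mul_phi10Term (a z : ℝ) (j n : ℕ) :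
    qPoch (a * p ^ n) p j * phi10Term p a z n = qPoch a p j * phi10Term p (a * p ^ j) z n := by
  have h : qPoch (a * p ^ n) p j * qPoch a p n = qPoch a p j * qPoch (a * p ^ j) p n := by
    rw [mul_comm, ← qPoch_add, ← qPoch_add, add_comm]
  unfold phi10Term
  linear_combination (z ^ n / qPoch p p n) * h

variable (hp : |p| < 1) (a : ℝ) {z : ℝ} (hz : |z| < 1)
include hp hz

lemma phi10_param_shift : phi10 p a z = (1 - a * z) * phi10 p (a * p) z := by
  have := tsum_sub_tsum_of_succ (summable_phi10Term hp a hz) (summable_phi10Term hp (a * p) hz)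
    (by rw [phi10Term_zero, phi10Term_zero]) _ _ (phi10Term_succ_sub_param_shift hp a z)
  rw [phi10, phi10] at *
  linarith

lemma phi10_arg_shift : (1 - z) * phi10 p a z = (1 - a * z) * phi10 p a (p * z) := by
  have hpz : |p * z| < 1 := by
    rw [abs_mul]; nlinarith [abs_nonneg p, abs_nonneg z]
  have hsub := tsum_sub_tsum_of_succ (summable_phi10Term hp a hz) (summable_phi10Term hp a hpz)
    (by rw [phi10Term_zero, phi10Term_zero]) _ _ (phi10Term_succ_sub_arg_shift hp a z)
  have hparam := phi10_param_shift hp a hz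
  rw [← phi10, ← phi10, ← phi10] at hsub
  linear_combination (1 - a * z) * hsub - (1 - a) * z * hparam

lemma phi10_eq_qPoch_mul_phi10_param (j : ℕ) :
    phi10 p a z = qPoch (a * z) p j * phi10 p (a * p ^ j) z := by
  induction j with
  | zero => simp [qPoch]
  | succ j ih =>
    rw [ih, phi10_param_shift hp (a * p ^ j) hz, qPoch_succ, pow_succ, mul_assoc a (p ^ j) p]
    ring

lemma qPoch_mul_phi10_eq_phi10_arg (m : ℕ) :
    qPoch z p m * phi10 p a z = qPoch (a * z) p m * phi10 p a (p ^ m * z) := by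
  induction m with
  | zero => simp [qPoch]
  | succ m ih =>
    have hstep := phi10_arg_shift hp a (abs_pow_mul_lt_one hp hz m)
    rw [qPoch_succ, qPoch_succ, pow_succ', mul_assoc p]
    linear_combination (1 - z * p ^ m) * ih + qPoch (a * z) p m * hstep

-- By the `q`-binomial theorem both sides equal `(z;p)_m (az;p)_∞ / (z;p)_∞`.
lemma qPoch_mul_phi10 (m j : ℕ) :
    qPoch z p m * phi10 p a z = qPoch (a * z) p (m + j) * phi10 p (a * p ^ j) (p ^ m * z) := by
  rw [qPoch_mul_phi10_eq_phi10_arg hp a hz m,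
    phi10_eq_qPoch_mul_phi10_param hp a (abs_pow_mul_lt_one hp hz m) j, ← mul_assoc,
    qPoch_add, mul_left_comm a, mul_comm (p ^ m)]

end Phi10

lemma chi1_eq_ofReal (p x : ℝ) (n : ℕ) :
    chi1 p x n = ((x ^ n * √(qPoch (p ^ 2) (p ^ 2) n) / qPoch p p n : ℝ) : ℂ) := by
  simp [chi1]

lemma chi1_mul_chi1 {p : ℝ} (hp : |p| < 1) (x y : ℝ) (n : ℕ) :
    chi1 p x n * chi1 p y n = (phi10Term p (-p) (x * y) n : ℂ) := by
  have hp2 : |p ^ 2| < 1 := by rw [abs_pow]; exact pow_lt_one₀ (abs_nonneg p) hp two_ne_zero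
  have hsq : √(qPoch (p ^ 2) (p ^ 2) n) * √(qPoch (p ^ 2) (p ^ 2) n) =
      qPoch p p n * qPoch (-p) p n := by
    rw [Real.mul_self_sqrt (qPoch_pos hp2 hp2.le n).le, qPoch_sq_sq]
  have := (qPoch_pos hp hp.le n).ne'
  rw [chi1_eq_ofReal, chi1_eq_ofReal, ← Complex.ofReal_mul, phi10Term, mul_pow]
  congr 1
  calc x ^ n * √(qPoch (p ^ 2) (p ^ 2) n) / qPoch p p n *
        (y ^ n * √(qPoch (p ^ 2) (p ^ 2) n) / qPoch p p n)
      = √(qPoch (p ^ 2) (p ^ 2) n) * √(qPoch (p ^ 2) (p ^ 2) n) * (x ^ n * y ^ n) /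
          (qPoch p p n * qPoch p p n) := by ring
    _ = qPoch (-p) p n / qPoch p p n * (x ^ n * y ^ n) := by
      rw [hsq]; field_simp

lemma pairF_chi1_chi1 {p : ℝ} (hp : |p| < 1) (x y : ℝ) :
    pairF (chi1 p x) (chi1 p y) = (phi10 p (-p) (x * y) : ℂ) := by
  rw [phi10, Complex.ofReal_tsum]
  exact tsum_congr (chi1_mul_chi1 hp x y)

lemma kOp_iter_apply (p : ℝ) (v : ℕ → ℂ) (m n : ℕ) :
    (kOp p)^[m] v n = ((p : ℂ) ^ n * (√p : ℝ)) ^ m * v n := by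
  induction m with
  | zero => simp
  | succ m ih =>
    rw [Function.iterate_succ_apply', kOp, ih, pow_succ]
    ring

lemma kOp_iter_chi1 (p y : ℝ) (m : ℕ) :
    (kOp p)^[m] (chi1 p y) = ((√p : ℝ) : ℂ) ^ m • chi1 p (p ^ m * y) := by
  funext n
  rw [kOp_iter_apply, Pi.smul_apply, smul_eq_mul, chi1, chi1]
  push_cast
  ring

lemma aMinus_chi1 {p : ℝ} (hp : |p| < 1) (y : ℝ) (n : ℕ) :
    aMinus p (chi1 p y) n = ((y * (1 + p ^ (n + 1)) : ℝ) : ℂ) * chi1 p y n := by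
  have hp2 : |p ^ 2| < 1 := by rw [abs_pow]; exact pow_lt_one₀ (abs_nonneg p) hp two_ne_zero
  have hr_pos : 0 < 1 - p ^ (2 * n + 2) := by
    rw [show 2 * n + 2 = 2 * (n + 1) by ring, pow_mul]; exact one_sub_pow_succ_pos hp2 n
  have hsqrt : √(qPoch (p ^ 2) (p ^ 2) (n + 1)) =
      √(qPoch (p ^ 2) (p ^ 2) n) * √(1 - p ^ (2 * n + 2)) := by
    rw [qPoch_succ, Real.sqrt_mul (qPoch_pos hp2 hp2.le n).le]
    congr 2
    ring
  have hfactor : 1 - p ^ (2 * n + 2) = (1 - p ^ (n + 1)) * (1 + p ^ (n + 1)) := by ring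
  have := (qPoch_pos hp hp.le n).ne'
  have := (one_sub_pow_succ_pos hp n).ne'
  rw [aMinus, chi1_eq_ofReal, chi1_eq_ofReal, ← Complex.ofReal_mul, ← Complex.ofReal_mul,
    hsqrt, qPoch_succ, ← pow_succ']
  congr 1
  calc √(1 - p ^ (2 * n + 2)) *
        (y ^ (n + 1) * (√(qPoch (p ^ 2) (p ^ 2) n) * √(1 - p ^ (2 * n + 2))) /
          (qPoch p p n * (1 - p ^ (n + 1))))
      = √(1 - p ^ (2 * n + 2)) * √(1 - p ^ (2 * n + 2)) * y ^ (n + 1) *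
          √(qPoch (p ^ 2) (p ^ 2) n) / (qPoch p p n * (1 - p ^ (n + 1))) := by ring
    _ = y * (1 + p ^ (n + 1)) * (y ^ n * √(qPoch (p ^ 2) (p ^ 2) n) / qPoch p p n) := by
      rw [Real.mul_self_sqrt hr_pos.le, hfactor]
      field_simp
      ring

lemma aMinus_iter_chi1 {p : ℝ} (hp : |p| < 1) (y : ℝ) (j n : ℕ) :
    (aMinus p)^[j] (chi1 p y) n = ((y ^ j * qPoch (-p * p ^ n) p j : ℝ) : ℂ) * chi1 p y n := by
  induction j generalizing n with
  | zero => simp [qPoch]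
  | succ j ih =>
    have hstep := aMinus_chi1 hp y n
    rw [aMinus] at hstep
    rw [Function.iterate_succ_apply', aMinus, ih (n + 1), qPoch_succ', mul_assoc (-p),
      ← pow_succ]
    push_cast at hstep ⊢
    linear_combination (y : ℂ) ^ j * (qPoch (-p * p ^ (n + 1)) p j : ℂ) * hstep

lemma aMinus_iter_smul (p : ℝ) (c : ℂ) (v : ℕ → ℂ) (j : ℕ) :
    (aMinus p)^[j] (c • v) = c • (aMinus p)^[j] v :=
  (Function.Commute.iterate_left (f := aMinus p) (g := (c • ·))
    (fun w => funext fun n => by simp only [aMinus, Pi.smul_apply, smul_eq_mul]; ring) j v)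

lemma pairF_smul_right (f g : ℕ → ℂ) (c : ℂ) : pairF f (c • g) = c * pairF f g := by
  simp only [pairF, Pi.smul_apply, smul_eq_mul, mul_left_comm _ c, tsum_mul_left]

lemma pairF_chi1_aMinus_iter_chi1 {p : ℝ} (hp : |p| < 1) (x y : ℝ) (j : ℕ) :
    pairF (chi1 p x) ((aMinus p)^[j] (chi1 p y)) =
      ((y ^ j * qPoch (-p) p j * phi10 p (-p * p ^ j) (x * y) : ℝ) : ℂ) := by
  rw [phi10, ← tsum_mul_left, Complex.ofReal_tsum, pairF]
  refine tsum_congr fun n => ?_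
  rw [aMinus_iter_chi1 hp, mul_left_comm, chi1_mul_chi1 hp, ← Complex.ofReal_mul,
    mul_assoc, qPoch_mul_phi10Term]
  congr 1
  ring

/-- `⟨(a⁻)^j k^m⟩₁₁ = p^{m/2+mj} (-p;p)_j (x;p)_m / (-px;p)_{j+m}`. -/
theorem bracket11_aMinus (p x : ℝ) (hp : 0 < p) (hp1 : p < 1) (hx : 0 < x) (hx1 : x < 1)
    (j m : ℕ) :
    pairF (chi1 p x) ((aMinus p)^[j] ((kOp p)^[m] (chi1 p 1))) /
        pairF (chi1 p x) (chi1 p 1) =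
      ((Real.sqrt p : ℝ) : ℂ) ^ m * (p : ℂ) ^ (m * j) *
        ((qPoch (-p) p j : ℝ) : ℂ) * ((qPoch x p m : ℝ) : ℂ) /
        ((qPoch (-(p * x)) p (j + m) : ℝ) : ℂ) := by
  have hp' : |p| < 1 := abs_lt.2 ⟨by linarith, hp1⟩
  have hx' : |x| < 1 := abs_lt.2 ⟨by linarith, hx1⟩
  have hpx : |-(p * x)| < 1 := by
    rw [abs_neg, abs_mul]; nlinarith [abs_nonneg p, abs_nonneg x]
  have hden := (phi10_pos (a := -p) hp' (by rwa [abs_neg]) hx hx').ne'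
  have hpoch := (qPoch_pos hpx hp'.le (j + m)).ne'
  have key := qPoch_mul_phi10 hp' (-p) hx' m j
  rw [neg_mul, add_comm m j] at key
  rw [kOp_iter_chi1, aMinus_iter_smul, pairF_smul_right, pairF_chi1_aMinus_iter_chi1 hp',
    pairF_chi1_chi1 hp', mul_one, mul_one, mul_comm x, div_eq_div_iff (by exact_mod_cast hden)
    (by exact_mod_cast hpoch)]
  have keyC := congrArg Complex.ofReal key
  push_cast at keyC ⊢
  linear_combination -((√p : ℂ) ^ m * (p : ℂ) ^ (m * j) * (qPoch (-p) p j : ℂ)) * keyC
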